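/- For m ≥ 1 and α ≥ 1, the number of self-conjugate partitions with distinct parts that are simultaneously (2α+1)-core and ((2α+1)m − 1)-core equals α + 1. -/

import Mathlib

/-- A partition: a weakly decreasing list of positive integers. -/
def IsPartition (l : List ℕ) : Prop :=
  l.Pairwise (· ≥ ·) ∧ ∀ x ∈ l, 0 < x

/-- Hook length at the cell in row `i`, column `j` (0-indexed). -/
def hookLength (l : List ℕ) (i j : ℕ) : ℕ :=
  (l.getD i 0 - j - 1) + ((l.filter (fun x => j < x)).length - i - 1) + 1

/-- The Young diagram of `l` contains a hook of length `h`. -/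
def HasHook (l : List ℕ) (h : ℕ) : Prop :=
  ∃ i j, j < l.getD i 0 ∧ hookLength l i j = h

/-- `l` is an `s`-core: no hook of length `s`. -/
def IsCore (s : ℕ) (l : List ℕ) : Prop := ¬ HasHook l s

/-- The conjugate (transpose) partition. -/
def conjugate (l : List ℕ) : List ℕ :=
  (List.range (l.headD 0)).map (fun j => (l.filter (fun x => j < x)).length)

def SelfConjugate (l : List ℕ) : Prop := conjugate l = l

/-- The staircase partition `(k, k-1, …, 1)`. -/
def staircase (k : ℕ) : List ℕ := (List.range k).map (fun i => k - i)

/-- The minimal bead set: the set of first-column hook lengths. -/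
def beadSet (l : List ℕ) : Finset ℕ :=
  (Finset.range l.length).image (fun i => l.getD i 0 + (l.length - 1 - i))

/-!
A self-conjugate partition with distinct parts is strictly decreasing with largest part equal to
its number of parts, so it is a staircase `(k, k-1, …, 1)`. The hook lengths of the staircase of
size `k` are exactly the odd numbers below `2k`. Hence it is a `(2α+1)`-core iff `k ≤ α`, and then
it is automatically a `((2α+1)m - 1)`-core, since that number is `0` or at least `2α`.
-/

@[simp]
lemma staircase_zero : staircase 0 = [] := rfl

lemma staircase_succ (k : ℕ) : staircase (k + 1) = (k + 1) :: staircase k := by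
  simp only [staircase, List.range_succ_eq_map, List.map_cons, List.map_map]
  congr 1
  exact List.map_congr_left fun i _ => by simp

@[simp]
lemma length_staircase (k : ℕ) : (staircase k).length = k := by simp [staircase]

lemma staircase_injective : Function.Injective staircase := fun a b h => by
  simpa using congrArg List.length h

lemma mem_staircase {k x : ℕ} : x ∈ staircase k ↔ 1 ≤ x ∧ x ≤ k := by
  simp only [staircase, List.mem_map, List.mem_range]
  exact ⟨by rintro ⟨i, hi, rfl⟩; omega, fun h => ⟨k - x, by omega, by omega⟩⟩

lemma getD_staircase (k i : ℕ) : (staircase k).getD i 0 = k - i := by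
  induction k generalizing i with
  | zero => simp
  | succ k ih =>
    cases i <;> simp only [staircase_succ, List.getD_cons_zero, List.getD_cons_succ, ih] <;> omega

lemma headD_staircase (k : ℕ) : (staircase k).headD 0 = k := by
  cases k <;> simp [staircase_succ]

lemma length_filter_lt_staircase (k j : ℕ) :
    ((staircase k).filter (j < ·)).length = k - j := by
  induction k with
  | zero => simp
  | succ k ih =>
    rw [staircase_succ, List.filter_cons]
    split_ifs with h <;> simp_all <;> omega

lemma pairwise_gt_staircase (k : ℕ) : (staircase k).Pairwise (· > ·) := by
  induction k with
  | zero => simp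
  | succ k ih =>
    rw [staircase_succ, List.pairwise_cons]
    exact ⟨fun x hx => by have := mem_staircase.1 hx; omega, ih⟩

lemma isPartition_staircase (k : ℕ) : IsPartition (staircase k) :=
  ⟨(pairwise_gt_staircase k).imp le_of_lt, fun _ hx => (mem_staircase.1 hx).1⟩

lemma nodup_staircase (k : ℕ) : (staircase k).Nodup :=
  (pairwise_gt_staircase k).imp ne_of_gt

lemma selfConjugate_staircase (k : ℕ) : SelfConjugate (staircase k) := by
  unfold SelfConjugate conjugate
  rw [headD_staircase]
  exact List.map_congr_left fun j _ => length_filter_lt_staircase k j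

lemma length_conjugate (l : List ℕ) : (conjugate l).length = l.headD 0 := by
  simp [conjugate]

lemma eq_staircase_of_pairwise_gt {l : List ℕ} (hdec : l.Pairwise (· > ·))
    (hpos : ∀ x ∈ l, 0 < x) (hhead : l.headD 0 ≤ l.length) : l = staircase l.length := by
  induction l with
  | nil => rfl
  | cons a t ih =>
    rw [List.pairwise_cons] at hdec
    have ht : t = staircase t.length := by
      refine ih hdec.2 (fun x hx => hpos x (List.mem_cons_of_mem a hx)) ?_
      cases t with
      | nil => simp
      | cons b t =>
        have := hdec.1 b List.mem_cons_self
        simp only [List.headD_cons, List.length_cons] at hhead ⊢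
        omega
    have ha : a = t.length + 1 := by
      have h0 := hpos a List.mem_cons_self
      simp only [List.headD_cons, List.length_cons] at hhead
      cases hn : t.length with
      | zero => omega
      | succ n =>
        have := hdec.1 (n + 1) (by rw [ht, hn]; exact mem_staircase.2 (by omega))
        omega
    rw [List.length_cons, staircase_succ, ← ha, ← ht]

lemma eq_staircase_of_selfConjugate {l : List ℕ} (hp : IsPartition l) (hsc : SelfConjugate l)
    (hnd : l.Nodup) : l = staircase l.length := by
  refine eq_staircase_of_pairwise_gt ?_ hp.2 ?_
  · exact (hp.1.and hnd).imp fun h => lt_of_le_of_ne h.1 (Ne.symm h.2)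
  · rw [← length_conjugate, hsc]

lemma isPartition_selfConjugate_nodup_iff {l : List ℕ} :
    IsPartition l ∧ SelfConjugate l ∧ l.Nodup ↔ ∃ k, l = staircase k :=
  ⟨fun ⟨hp, hsc, hnd⟩ => ⟨_, eq_staircase_of_selfConjugate hp hsc hnd⟩,
    by rintro ⟨k, rfl⟩; exact ⟨isPartition_staircase k, selfConjugate_staircase k, nodup_staircase k⟩⟩

lemma hookLength_staircase {k i j : ℕ} (h : i + j < k) :
    hookLength (staircase k) i j = 2 * (k - i - j) - 1 := by
  unfold hookLength
  rw [getD_staircase, length_filter_lt_staircase]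
  omega

lemma hasHook_staircase_iff {k s : ℕ} : HasHook (staircase k) s ↔ Odd s ∧ s < 2 * k := by
  constructor
  · rintro ⟨i, j, hj, rfl⟩
    rw [getD_staircase] at hj
    rw [hookLength_staircase (by omega)]
    exact ⟨⟨k - i - j - 1, by omega⟩, by omega⟩
  · rintro ⟨⟨t, rfl⟩, hs⟩
    refine ⟨0, k - t - 1, by rw [getD_staircase]; omega, ?_⟩
    rw [hookLength_staircase (by omega)]
    omega

lemma isCore_staircase_iff {k s : ℕ} : IsCore s (staircase k) ↔ Even s ∨ 2 * k ≤ s := by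
  rw [IsCore, hasHook_staircase_iff, not_and_or, Nat.not_odd_iff_even, not_lt]

theorem selfConjugate_distinct_odd_minus_general (m α : ℕ) :
    {l : List ℕ | IsPartition l ∧ SelfConjugate l ∧ l.Nodup ∧
      IsCore (2 * α + 1) l ∧ IsCore ((2 * α + 1) * m - 1) l}.ncard = α + 1 := by
  have hset : {l : List ℕ | IsPartition l ∧ SelfConjugate l ∧ l.Nodup ∧
      IsCore (2 * α + 1) l ∧ IsCore ((2 * α + 1) * m - 1) l} = staircase '' Set.Iic α := by
    ext l
    simp only [Set.mem_ofPred_eq, Set.mem_image, Set.mem_Iic]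
    constructor
    · rintro ⟨hp, hsc, hnd, hcore, -⟩
      obtain ⟨k, rfl⟩ := isPartition_selfConjugate_nodup_iff.1 ⟨hp, hsc, hnd⟩
      refine ⟨k, ?_, rfl⟩
      rcases isCore_staircase_iff.1 hcore with h | h
      · exact absurd h (Nat.not_even_two_mul_add_one α)
      · omega
    · rintro ⟨k, hk, rfl⟩
      obtain ⟨hp, hsc, hnd⟩ := isPartition_selfConjugate_nodup_iff.2 ⟨k, rfl⟩
      refine ⟨hp, hsc, hnd, isCore_staircase_iff.2 (Or.inr (by omega)), isCore_staircase_iff.2 ?_⟩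
      rcases Nat.eq_zero_or_pos m with rfl | hm
      · simp
      · have := Nat.le_mul_of_pos_right (2 * α + 1) hm
        exact Or.inr (by omega)
  rw [hset, staircase_injective.injOn.ncard_image, Set.ncard_eq_toFinset_card', Set.toFinset_Iic,
    Nat.card_Iic]

theorem selfConjugate_distinct_odd_minus (m α : ℕ) (hm : 1 ≤ m) (hα : 1 ≤ α) :
    {l : List ℕ | IsPartition l ∧ SelfConjugate l ∧ l.Nodup ∧
      IsCore (2 * α + 1) l ∧ IsCore ((2 * α + 1) * m - 1) l}.ncard = α + 1 :=
  selfConjugate_distinct_odd_minus_general m α
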